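/- For the tiling of V into singleton cells (induced by the sealed-bid auction) and the function A_k: the average-case PAR with respect to party 1 equals 2^k/3 + 1/(3·2^{k−1}), and the average-case PAR with respect to party 2 equals 2^k/3 + 1 − 1/(3·2^k); moreover, every A_k-monochromatic tiling of V has average-case subjective PAR at most 2^k/3 + 1 − 1/(3·2^k). -/
import Mathlib


open Finset

/-- The value space `{0,…,2^k−1} × {0,…,2^k−1}`. -/
def Vk (k : ℕ) : Finset (ℕ × ℕ) := Finset.range (2 ^ k) ×ˢ Finset.range (2 ^ k)

/-- A tiling of `Vk k`: a finite collection of nonempty rectangles partitioning `Vk k`. -/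
def IsTiling (k : ℕ) (T : Finset (Finset (ℕ × ℕ))) : Prop :=
  (∀ R ∈ T, ∃ S S' : Finset ℕ, R = S ×ˢ S') ∧
    (∀ R ∈ T, R.Nonempty) ∧ (∀ R ∈ T, R ⊆ Vk k) ∧ ∀ x ∈ Vk k, ∃! R, R ∈ T ∧ x ∈ R

/-- `f`-monochromaticity of a tiling. -/
def Mono {β : Type} (f : ℕ × ℕ → β) (T : Finset (Finset (ℕ × ℕ))) : Prop :=
  ∀ R ∈ T, ∀ x ∈ R, ∀ y ∈ R, f x = f y

/-- The tile of `T` containing `x` (union of all tiles containing `x`; for a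
tiling this is exactly the unique tile containing `x`). -/
def tileOf (T : Finset (Finset (ℕ × ℕ))) (x : ℕ × ℕ) : Finset (ℕ × ℕ) :=
  (T.filter fun R => x ∈ R).sup id

/-- The ideal region of `x`: the level set of `f x` inside `Vk k`. -/
def ideal {β : Type} [DecidableEq β] (k : ℕ) (f : ℕ × ℕ → β) (x : ℕ × ℕ) : Finset (ℕ × ℕ) :=
  (Vk k).filter fun y => f y = f x

/-- Average-case objective PAR of a tiling w.r.t. the uniform distribution. -/
def avgObjPAR {β : Type} [DecidableEq β] (k : ℕ) (f : ℕ × ℕ → β)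
    (T : Finset (Finset (ℕ × ℕ))) : ℚ :=
  (∑ x ∈ Vk k, ((ideal k f x).card : ℚ) / ((tileOf T x).card : ℚ)) / 2 ^ (2 * k)

/-- Average-case PAR with respect to party 1. -/
def avgPAR1 {β : Type} [DecidableEq β] (k : ℕ) (f : ℕ × ℕ → β)
    (T : Finset (Finset (ℕ × ℕ))) : ℚ :=
  (∑ x ∈ Vk k,
      (((Finset.range (2 ^ k)).filter fun y => f (x.1, y) = f x).card : ℚ) /
        (((Finset.range (2 ^ k)).filter fun y => (x.1, y) ∈ tileOf T x).card : ℚ)) /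
    2 ^ (2 * k)

/-- Average-case PAR with respect to party 2. -/
def avgPAR2 {β : Type} [DecidableEq β] (k : ℕ) (f : ℕ × ℕ → β)
    (T : Finset (Finset (ℕ × ℕ))) : ℚ :=
  (∑ x ∈ Vk k,
      (((Finset.range (2 ^ k)).filter fun y => f (y, x.2) = f x).card : ℚ) /
        (((Finset.range (2 ^ k)).filter fun y => (y, x.2) ∈ tileOf T x).card : ℚ)) /
    2 ^ (2 * k)

/-- The millionaires function: `1` if `x1 ≥ x2`, else `2`. -/
def Mil (x : ℕ × ℕ) : ℕ := if x.2 ≤ x.1 then 1 else 2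

/-- The second-price auction function. -/
def Auc (x : ℕ × ℕ) : ℕ × ℕ := if x.2 ≤ x.1 then (1, x.2) else (2, x.1)

/-- Translate a tile by `(a, a)`. -/
def shiftTile (a : ℕ) (R : Finset (ℕ × ℕ)) : Finset (ℕ × ℕ) :=
  R.image fun p => (p.1 + a, p.2 + a)

/-- The bisection-protocol tiling `B_k`. -/
def Btile : ℕ → Finset (Finset (ℕ × ℕ))
  | 0 => {{(0, 0)}}
  | j + 1 =>
    Btile j ∪ (Btile j).image (shiftTile (2 ^ j)) ∪
      {Finset.range (2 ^ j) ×ˢ Finset.Ico (2 ^ j) (2 ^ (j + 1)),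
        Finset.Ico (2 ^ j) (2 ^ (j + 1)) ×ˢ Finset.range (2 ^ j)}

/-- The bounded-bisection-auction tiling `T_{c,i}`. -/
def BBA : ℕ → ℕ → Finset (Finset (ℕ × ℕ))
  | 0, i =>
    (Finset.range (2 ^ i)).image (fun p => Finset.Ico p (2 ^ i) ×ˢ ({p} : Finset ℕ)) ∪
      (Finset.range (2 ^ i - 1)).image fun p => ({p} : Finset ℕ) ×ˢ Finset.Ico (p + 1) (2 ^ i)
  | c + 1, i =>
    BBA c i ∪ (BBA c i).image (shiftTile (2 ^ (c + i))) ∪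
      (Finset.range (2 ^ (c + i))).image
        (fun j => Finset.Ico (2 ^ (c + i)) (2 ^ (c + i + 1)) ×ˢ ({j} : Finset ℕ)) ∪
      (Finset.range (2 ^ (c + i))).image fun j =>
        ({j} : Finset ℕ) ×ˢ Finset.Ico (2 ^ (c + i)) (2 ^ (c + i + 1))

/-- The public-good function: `true` iff `x1 + x2 ≥ 2^k − 1` ("Build"). -/
def PG (k : ℕ) (x : ℕ × ℕ) : Bool := decide (2 ^ k - 1 ≤ x.1 + x.2)

/-- The truthful public-good function: `none` = "Do Not Build". -/
def TPG (c : ℕ) (x : ℕ × ℕ) : Option (ℕ × ℕ) :=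
  if x.1 + x.2 < c then none else some (c - x.2, c - x.1)

/-- The tiling of `Vk k` into singleton cells (sealed-bid auction). -/
def sealedTiling (k : ℕ) : Finset (Finset (ℕ × ℕ)) :=
  (Vk k).image fun x => ({x} : Finset (ℕ × ℕ))


section Aux

private lemma sumid (n : ℕ) : ∑ i ∈ Finset.range n, (i : ℚ) = ((n:ℚ)^2 - n)/2 := by
  induction n with
  | zero => simp
  | succ m ih => rw [Finset.sum_range_succ, ih]; push_cast; ring

private lemma sumsq (n : ℕ) : ∑ i ∈ Finset.range n, (i : ℚ)^2 = (2*(n:ℚ)^3 - 3*(n:ℚ)^2 + n)/6 := by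
  induction n with
  | zero => simp
  | succ m ih => rw [Finset.sum_range_succ, ih]; push_cast; ring

private lemma reflsq (n : ℕ) :
    ∑ i ∈ Finset.range n, ((n:ℚ) - i - 1)^2 = ∑ i ∈ Finset.range n, (i:ℚ)^2 := by
  rw [← Finset.sum_range_reflect (fun j => ((j:ℕ):ℚ)^2) n]
  apply Finset.sum_congr rfl
  intro i hi
  have hi' := Finset.mem_range.mp hi
  congr 1
  rw [Nat.cast_sub (by omega), Nat.cast_sub (by omega)]
  push_cast; ring

private lemma reflsq' (n : ℕ) :
    ∑ i ∈ Finset.range n, ((n:ℚ) - i)^2 = ∑ i ∈ Finset.range n, ((i:ℚ)+1)^2 := by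
  rw [← Finset.sum_range_reflect (fun j => ((j:ℚ)+1)^2) n]
  apply Finset.sum_congr rfl
  intro i hi
  have hi' := Finset.mem_range.mp hi
  congr 1
  rw [Nat.cast_sub (by omega), Nat.cast_sub (by omega)]
  push_cast; ring

private lemma f1 (n x1 x2 : ℕ) (h2 : x2 < n) :
    (Finset.range n).filter (fun y => Auc (x1, y) = Auc (x1, x2)) =
      if x2 ≤ x1 then {x2} else Finset.Ico (x1+1) n := by
  split_ifs with h
  · ext y
    simp only [Finset.mem_filter, Finset.mem_range, Finset.mem_singleton, Auc, h, if_true]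
    by_cases hy : y ≤ x1 <;> simp [hy, Prod.ext_iff] <;> omega
  · ext y
    simp only [Finset.mem_filter, Finset.mem_range, Finset.mem_Ico, Auc, h, if_false]
    by_cases hy : y ≤ x1 <;> simp [hy, Prod.ext_iff] <;> omega

private lemma f2 (n x1 x2 : ℕ) (h1 : x1 < n) :
    (Finset.range n).filter (fun y => Auc (y, x2) = Auc (x1, x2)) =
      if x2 ≤ x1 then Finset.Ico x2 n else {x1} := by
  split_ifs with h
  · ext y
    simp only [Finset.mem_filter, Finset.mem_range, Finset.mem_Ico, Auc, h, if_true]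
    by_cases hy : x2 ≤ y <;> simp [hy, Prod.ext_iff] <;> omega
  · ext y
    simp only [Finset.mem_filter, Finset.mem_range, Finset.mem_singleton, Auc, h, if_false]
    by_cases hy : x2 ≤ y <;> simp [hy, Prod.ext_iff] <;> omega

private lemma sum1 (n : ℕ) :
    ∑ x ∈ Finset.range n ×ˢ Finset.range n,
      (((Finset.range n).filter fun y => Auc (x.1, y) = Auc x).card : ℚ)
      = (2*(n:ℚ)^3 + 4*(n:ℚ))/6 := by
  rw [Finset.sum_product]
  have step : ∀ x1 ∈ Finset.range n,
      (∑ x2 ∈ Finset.range n,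
        (((Finset.range n).filter fun y => Auc ((x1, x2).1, y) = Auc (x1, x2)).card : ℚ))
        = ((x1:ℚ) + 1) + ((n:ℚ) - x1 - 1)^2 := by
    intro x1 hx1
    have hx1' : x1 < n := Finset.mem_range.mp hx1
    have key : ∀ x2 ∈ Finset.range n,
        (((Finset.range n).filter fun y => Auc ((x1, x2).1, y) = Auc (x1, x2)).card : ℚ)
        = if x2 ≤ x1 then 1 else (n:ℚ) - x1 - 1 := by
      intro x2 hx2
      show (((Finset.range n).filter fun y => Auc (x1, y) = Auc (x1, x2)).card : ℚ) = _
      rw [f1 n x1 x2 (Finset.mem_range.mp hx2)]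
      split_ifs with h
      · simp
      · rw [Nat.card_Ico, Nat.cast_sub (by omega)]; push_cast; ring
    rw [Finset.sum_congr rfl key, Finset.sum_ite, Finset.sum_const, Finset.sum_const]
    have e1 : (Finset.range n).filter (fun x2 => x2 ≤ x1) = Finset.range (x1+1) := by
      ext y; simp; omega
    have e2 : (Finset.range n).filter (fun x2 => ¬ x2 ≤ x1) = Finset.Ico (x1+1) n := by
      ext y; simp; omega
    rw [e1, e2, Finset.card_range, Nat.card_Ico, nsmul_eq_mul, nsmul_eq_mul,
      Nat.cast_sub (by omega)]
    push_cast; ring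
  rw [Finset.sum_congr rfl step, Finset.sum_add_distrib, reflsq, sumsq,
    Finset.sum_add_distrib, sumid, Finset.sum_const, Finset.card_range, nsmul_eq_mul]
  ring

private lemma sum2 (n : ℕ) :
    ∑ x ∈ Finset.range n ×ˢ Finset.range n,
      (((Finset.range n).filter fun y => Auc (y, x.2) = Auc x).card : ℚ)
      = (2*(n:ℚ)^3 + 6*(n:ℚ)^2 - 2*(n:ℚ))/6 := by
  rw [Finset.sum_product_right]
  have step : ∀ x2 ∈ Finset.range n,
      (∑ x1 ∈ Finset.range n,
        (((Finset.range n).filter fun y => Auc (y, (x1, x2).2) = Auc (x1, x2)).card : ℚ))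
        = ((n:ℚ) - x2)^2 + (x2:ℚ) := by
    intro x2 hx2
    have hx2' : x2 < n := Finset.mem_range.mp hx2
    have key : ∀ x1 ∈ Finset.range n,
        (((Finset.range n).filter fun y => Auc (y, (x1, x2).2) = Auc (x1, x2)).card : ℚ)
        = if x2 ≤ x1 then (n:ℚ) - x2 else 1 := by
      intro x1 hx1
      show (((Finset.range n).filter fun y => Auc (y, x2) = Auc (x1, x2)).card : ℚ) = _
      rw [f2 n x1 x2 (Finset.mem_range.mp hx1)]
      split_ifs with h
      · rw [Nat.card_Ico, Nat.cast_sub (by omega)]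
      · simp
    rw [Finset.sum_congr rfl key, Finset.sum_ite, Finset.sum_const, Finset.sum_const]
    have e1 : (Finset.range n).filter (fun x1 => x2 ≤ x1) = Finset.Ico x2 n := by
      ext y; simp; omega
    have e2 : (Finset.range n).filter (fun x1 => ¬ x2 ≤ x1) = Finset.range x2 := by
      ext y; simp; omega
    rw [e1, e2, Finset.card_range, Nat.card_Ico, nsmul_eq_mul, nsmul_eq_mul,
      Nat.cast_sub (by omega)]
    push_cast; ring
  have esq : ∑ i ∈ Finset.range n, ((i:ℚ)+1)^2 = (2*(n:ℚ)^3+3*(n:ℚ)^2+(n:ℚ))/6 := by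
    have expand : ∀ i ∈ Finset.range n, ((i:ℚ)+1)^2 = ((i:ℚ)^2 + 2*(i:ℚ)) + 1 := by
      intro i _; ring
    rw [Finset.sum_congr rfl expand, Finset.sum_add_distrib, Finset.sum_add_distrib,
      sumsq, ← Finset.mul_sum, sumid, Finset.sum_const, Finset.card_range, nsmul_eq_mul]
    ring
  rw [Finset.sum_congr rfl step, Finset.sum_add_distrib, reflsq', esq, sumid]
  ring

private lemma tile_sealed {k : ℕ} {x : ℕ × ℕ} (hx : x ∈ Vk k) :
    tileOf (sealedTiling k) x = {x} := by
  have h : (sealedTiling k).filter (fun R => x ∈ R) = {({x} : Finset (ℕ×ℕ))} := by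
    ext R
    simp only [Finset.mem_filter, sealedTiling, Finset.mem_image, Finset.mem_singleton]
    constructor
    · rintro ⟨⟨y, hy, rfl⟩, hxR⟩
      simp_all
    · rintro rfl
      exact ⟨⟨x, hx, rfl⟩, Finset.mem_singleton_self x⟩
  rw [tileOf, h, Finset.sup_singleton]
  rfl

private lemma mem_tileOf {k : ℕ} {T : Finset (Finset (ℕ × ℕ))} (hT : IsTiling k T)
    {x : ℕ × ℕ} (hx : x ∈ Vk k) : x ∈ tileOf T x := by
  obtain ⟨R, ⟨hR, hxR⟩, _⟩ := hT.2.2.2 x hx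
  exact Finset.mem_sup.mpr ⟨R, Finset.mem_filter.mpr ⟨hR, hxR⟩, hxR⟩

private lemma den1_sealed {k : ℕ} {x : ℕ × ℕ} (hx : x ∈ Vk k) :
    ((Finset.range (2^k)).filter fun y => (x.1, y) ∈ tileOf (sealedTiling k) x) = {x.2} := by
  have hx2 : x.2 < 2^k := Finset.mem_range.mp (Finset.mem_product.mp hx).2
  rw [tile_sealed hx]
  ext y
  simp only [Finset.mem_filter, Finset.mem_range, Finset.mem_singleton, Prod.ext_iff]
  constructor
  · rintro ⟨_, _, h⟩; exact h
  · rintro rfl; exact ⟨hx2, by simp⟩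

private lemma den2_sealed {k : ℕ} {x : ℕ × ℕ} (hx : x ∈ Vk k) :
    ((Finset.range (2^k)).filter fun y => (y, x.2) ∈ tileOf (sealedTiling k) x) = {x.1} := by
  have hx1 : x.1 < 2^k := Finset.mem_range.mp (Finset.mem_product.mp hx).1
  rw [tile_sealed hx]
  ext y
  simp only [Finset.mem_filter, Finset.mem_range, Finset.mem_singleton, Prod.ext_iff]
  constructor
  · rintro ⟨_, h, _⟩; exact h
  · rintro rfl; exact ⟨hx1, by simp⟩

end Aux

/-- for the singleton (sealed-bid) tiling and `A_k`: the
average-case PAR w.r.t. party 1 equals `2^k/3 + 1/(3·2^{k−1})`, the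
average-case PAR w.r.t. party 2 equals `2^k/3 + 1 − 1/(3·2^k)`; moreover every
`A_k`-monochromatic tiling of `V` has average-case subjective PAR at most
`2^k/3 + 1 − 1/(3·2^k)`. -/
theorem stmt19 (k : ℕ) (hk : 1 ≤ k) :
    avgPAR1 k Auc (sealedTiling k) = (2 ^ k : ℚ) / 3 + 1 / (3 * 2 ^ (k - 1)) ∧
      avgPAR2 k Auc (sealedTiling k) = (2 ^ k : ℚ) / 3 + 1 - 1 / (3 * 2 ^ k) ∧
      ∀ T : Finset (Finset (ℕ × ℕ)), IsTiling k T → Mono Auc T →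
        max (avgPAR1 k Auc T) (avgPAR2 k Auc T) ≤
          (2 ^ k : ℚ) / 3 + 1 - 1 / (3 * 2 ^ k) := by
  obtain ⟨m, rfl⟩ : ∃ m, k = m + 1 := ⟨k - 1, by omega⟩
  have ham : (0:ℚ) < 2 ^ m := by positivity
  have ha1 : (1:ℚ) ≤ 2 ^ m := one_le_pow₀ (by norm_num)
  have e1 : avgPAR1 (m+1) Auc (sealedTiling (m+1))
      = (∑ x ∈ Vk (m+1),
          (((Finset.range (2^(m+1))).filter fun y => Auc (x.1, y) = Auc x).card : ℚ))
        / 2^(2*(m+1)) := by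
    unfold avgPAR1
    congr 1
    apply Finset.sum_congr rfl
    intro x hx
    rw [den1_sealed hx]
    simp
  have e2 : avgPAR2 (m+1) Auc (sealedTiling (m+1))
      = (∑ x ∈ Vk (m+1),
          (((Finset.range (2^(m+1))).filter fun y => Auc (y, x.2) = Auc x).card : ℚ))
        / 2^(2*(m+1)) := by
    unfold avgPAR2
    congr 1
    apply Finset.sum_congr rfl
    intro x hx
    rw [den2_sealed hx]
    simp
  have hpow : (2:ℚ)^(2*(m+1)) = ((2:ℚ)^(m+1))^2 := by rw [mul_comm, pow_mul]
  have hcast : ((2^(m+1) : ℕ) : ℚ) = 2 * 2^m := by push_cast [pow_succ]; ring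
  have h1 : avgPAR1 (m+1) Auc (sealedTiling (m+1))
      = (2 ^ (m+1) : ℚ) / 3 + 1 / (3 * 2 ^ (m + 1 - 1)) := by
    rw [e1]
    show (∑ x ∈ Finset.range (2^(m+1)) ×ˢ Finset.range (2^(m+1)), _) / _ = _
    rw [sum1 (2^(m+1)), hpow, hcast, Nat.add_sub_cancel, pow_succ]
    field_simp
    ring
  have h2 : avgPAR2 (m+1) Auc (sealedTiling (m+1))
      = (2 ^ (m+1) : ℚ) / 3 + 1 - 1 / (3 * 2 ^ (m+1)) := by
    rw [e2]
    show (∑ x ∈ Finset.range (2^(m+1)) ×ˢ Finset.range (2^(m+1)), _) / _ = _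
    rw [sum2 (2^(m+1)), hpow, hcast, pow_succ]
    field_simp
    ring
  refine ⟨h1, h2, ?_⟩
  intro T hT _hM
  have bnd1 : avgPAR1 (m+1) Auc T ≤ avgPAR1 (m+1) Auc (sealedTiling (m+1)) := by
    unfold avgPAR1
    rw [div_le_div_iff_of_pos_right (by positivity)]
    apply Finset.sum_le_sum
    intro x hx
    rw [den1_sealed hx]
    simp only [Finset.card_singleton, Nat.cast_one, div_one]
    apply div_le_self (by positivity)
    have hx2 : x.2 < 2^(m+1) := Finset.mem_range.mp (Finset.mem_product.mp hx).2
    have hmem : x.2 ∈ (Finset.range (2^(m+1))).filter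
        (fun y => (x.1, y) ∈ tileOf T x) := by
      simp only [Finset.mem_filter, Finset.mem_range]
      exact ⟨hx2, by rw [Prod.mk.eta]; exact mem_tileOf hT hx⟩
    have hc : 0 < ((Finset.range (2^(m+1))).filter
        (fun y => (x.1, y) ∈ tileOf T x)).card := Finset.card_pos.mpr ⟨x.2, hmem⟩
    exact_mod_cast hc
  have bnd2 : avgPAR2 (m+1) Auc T ≤ avgPAR2 (m+1) Auc (sealedTiling (m+1)) := by
    unfold avgPAR2
    rw [div_le_div_iff_of_pos_right (by positivity)]
    apply Finset.sum_le_sum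
    intro x hx
    rw [den2_sealed hx]
    simp only [Finset.card_singleton, Nat.cast_one, div_one]
    apply div_le_self (by positivity)
    have hx1 : x.1 < 2^(m+1) := Finset.mem_range.mp (Finset.mem_product.mp hx).1
    have hmem : x.1 ∈ (Finset.range (2^(m+1))).filter
        (fun y => (y, x.2) ∈ tileOf T x) := by
      simp only [Finset.mem_filter, Finset.mem_range]
      exact ⟨hx1, by rw [Prod.mk.eta]; exact mem_tileOf hT hx⟩
    have hc : 0 < ((Finset.range (2^(m+1))).filter
        (fun y => (y, x.2) ∈ tileOf T x)).card := Finset.card_pos.mpr ⟨x.1, hmem⟩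
    exact_mod_cast hc
  have ineq : (2 ^ (m+1) : ℚ) / 3 + 1 / (3 * 2 ^ (m + 1 - 1))
      ≤ (2 ^ (m+1) : ℚ) / 3 + 1 - 1 / (3 * 2 ^ (m+1)) := by
    rw [Nat.add_sub_cancel, pow_succ]
    have key : (1:ℚ)/(3*2^m) + 1/(3*(2^m*2)) ≤ 1 := by
      rw [div_add_div _ _ (by positivity) (by positivity), div_le_one (by positivity)]
      nlinarith [ham, ha1]
    linarith
  exact max_le (bnd1.trans (h1.trans_le ineq)) (bnd2.trans (le_of_eq h2))
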